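/- arXiv:2503.18823 — 6 statements merged into one kernel-verified Lean document; each statement's English description precedes it below -/
import Mathlib

section
/- Let V be a vertex type and E : V → V → Prop an adjacency relation such that the graph (V,E) is weakly connected. If some subset X ⊆ V is simultaneously a forward ergodic set and a backward ergodic set of (V,E), then X = V and the graph (V,E) is strongly connected (i.e., any two vertices of V communicate). -/
/-- `y` is reachable from `x`: `(x,y)` is in the reflexive–transitive closure of `E`. -/
def Reachable {V : Type*} (E : V → V → Prop) (x y : V) : Prop :=
  Relation.ReflTransGen E x y

/-- `x` and `y` communicate: each is reachable from the other. -/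
def Communicates {V : Type*} (E : V → V → Prop) (x y : V) : Prop :=
  Reachable E x y ∧ Reachable E y x

/-- Reachability by a directed walk all of whose vertices lie in `X`. -/
def ReachIn {V : Type*} (E : V → V → Prop) (X : Set V) (x y : V) : Prop :=
  Relation.ReflTransGen (fun a b => a ∈ X ∧ b ∈ X ∧ E a b) x y

/-- `X` is strongly connected: any two of its vertices are joined, in both directions,
by directed walks all of whose vertices lie in `X`. -/
def StronglyConnectedIn {V : Type*} (E : V → V → Prop) (X : Set V) : Prop :=
  ∀ x ∈ X, ∀ y ∈ X, ReachIn E X x y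

/-- `X` is a forward ergodic set: nonempty, strongly connected, no edge leaving `X`. -/
def IsForwardErgodicSet {V : Type*} (E : V → V → Prop) (X : Set V) : Prop :=
  X.Nonempty ∧ StronglyConnectedIn E X ∧ ∀ x ∈ X, ∀ v ∉ X, ¬ E x v

/-- `X` is a backward ergodic set: nonempty, strongly connected, no edge entering `X`. -/
def IsBackwardErgodicSet {V : Type*} (E : V → V → Prop) (X : Set V) : Prop :=
  X.Nonempty ∧ StronglyConnectedIn E X ∧ ∀ x ∈ X, ∀ v ∉ X, ¬ E v x

/-- The graph is weakly connected: any two vertices are related under the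
reflexive–transitive–symmetric closure of `E`. -/
def WeaklyConnected {V : Type*} (E : V → V → Prop) : Prop :=
  ∀ x y : V, Relation.ReflTransGen (fun a b => E a b ∨ E b a) x y

/-- In a weakly connected graph, a set that is simultaneously a forward and a backward
ergodic set is the whole vertex set, and the graph is strongly connected. -/
theorem forward_and_backward_ergodic_of_weakly_connected {V : Type*}
    (E : V → V → Prop) (hwc : WeaklyConnected E) (X : Set V)
    (hfw : IsForwardErgodicSet E X) (hbw : IsBackwardErgodicSet E X) :
    X = Set.univ ∧ ∀ x y : V, Communicates E x y := by
  obtain ⟨⟨x0, hx0⟩, hsc, hout⟩ := hfw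
  obtain ⟨_, _, hin⟩ := hbw
  have hcl : ∀ y : V, y ∈ X := by
    intro y
    have h := hwc x0 y
    induction h with
    | refl => exact hx0
    | tail _ hstep ih =>
      rcases hstep with h | h
      · by_contra hc; exact hout _ ih _ hc h
      · by_contra hc; exact hin _ ih _ hc h
  have hX : X = Set.univ := Set.eq_univ_of_forall hcl
  refine ⟨hX, fun x y => ?_⟩
  have hr : ∀ a b : V, Reachable E a b := by
    intro a b
    have := hsc a (hcl a) b (hcl b)
    exact Relation.ReflTransGen.mono (p := E) (fun u v (h : u ∈ X ∧ v ∈ X ∧ E u v) => h.2.2) a b this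
  exact ⟨hr x y, hr y x⟩
end

section
/- Let V be a vertex type and E : V → V → Prop an adjacency relation. Suppose a vertex v ∈ V belongs to some forward ergodic set X and also to some backward ergodic set Y of (V,E). Then X = Y, and the weakly connected component of v (the set of all vertices related to v under the reflexive–transitive–symmetric closure of E) equals X and is strongly connected. -/
/-- The weakly connected component of `v`: all vertices related to `v` under the
reflexive–transitive–symmetric closure of `E`. -/
def WeakComponent {V : Type*} (E : V → V → Prop) (v : V) : Set V :=
  {w | Relation.ReflTransGen (fun a b => E a b ∨ E b a) v w}

/-- If a vertex belongs to a forward ergodic set `X` and a backward ergodic set `Y`,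
then `X = Y`, and the weakly connected component of the vertex equals `X` and is
strongly connected. -/
theorem forward_and_backward_through_common_vertex {V : Type*} (E : V → V → Prop)
    (v : V) (X Y : Set V) (hX : IsForwardErgodicSet E X) (hY : IsBackwardErgodicSet E Y)
    (hvX : v ∈ X) (hvY : v ∈ Y) :
    X = Y ∧ WeakComponent E v = X ∧ StronglyConnectedIn E (WeakComponent E v) := by
  obtain ⟨-, hXsc, hXout⟩ := hX
  obtain ⟨-, hYsc, hYin⟩ := hY
  -- X is forward closed
  have hXfwd : ∀ a b, a ∈ X → E a b → b ∈ X := by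
    intro a b ha hab
    by_contra hb
    exact hXout a ha b hb hab
  -- Y is backward closed
  have hYbwd : ∀ a b, b ∈ Y → E a b → a ∈ Y := by
    intro a b hb hab
    by_contra ha
    exact hYin b hb a ha hab
  have hXY : X ⊆ Y := by
    intro x hx
    have key : ∀ c, ReachIn E X x c → c ∈ Y → x ∈ Y := by
      intro c h
      induction h with
      | refl => exact id
      | tail _ hbc ih => exact fun hc => ih (hYbwd _ _ hc hbc.2.2)
    exact key v (hXsc x hx v hvX) hvY
  have hYX : Y ⊆ X := by
    intro y hy
    have key : ∀ c, ReachIn E Y v c → c ∈ X := by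
      intro c h
      induction h with
      | refl => exact hvX
      | tail _ hbc ih => exact hXfwd _ _ ih hbc.2.2
    exact key y (hYsc v hvY y hy)
  have hXeqY : X = Y := Set.Subset.antisymm hXY hYX
  have hWX : WeakComponent E v = X := by
    apply Set.Subset.antisymm
    · intro w hw
      induction hw with
      | refl => exact hvX
      | tail _ hbc ih =>
        rcases hbc with h | h
        · exact hXfwd _ _ ih h
        · exact hYX (hYbwd _ _ (hXY ih) h)
    · intro x hx
      have key : ∀ c, ReachIn E X v c → c ∈ WeakComponent E v := by
        intro c h
        induction h with
        | refl => exact Relation.ReflTransGen.refl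
        | tail _ hbc ih => exact ih.tail (Or.inl hbc.2.2)
      exact key x (hXsc v hvX x hx)
  refine ⟨hXeqY, hWX, ?_⟩
  rw [hWX]
  exact hXsc
end

section
/- Let V be a nonempty finite vertex type and E : V → V → Prop an adjacency relation. Then for every vertex v ∈ V there exists a forward ergodic set X of (V,E) and a vertex x ∈ X such that x is reachable from v. (Every trajectory of the random walk eventually enters a sink, i.e., a closed communicating class.) -/
private lemma reachIn_of_closed {V : Type*} (E : V → V → Prop) (X : Set V)
    (hcl : ∀ a ∈ X, ∀ b, E a b → b ∈ X) {a b : V} (ha : a ∈ X)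
    (h : Relation.ReflTransGen E a b) : ReachIn E X a b := by
  induction h with
  | refl => exact Relation.ReflTransGen.refl
  | tail _ hbc ih =>
      rename_i c d _
      have hc : c ∈ X := by
        rcases ih.cases_head with h | ⟨e, ⟨_, he, _⟩, _⟩
        · exact h ▸ ha
        · -- need c ∈ X; do induction on membership instead
          exact reachIn_mem ih
      exact Relation.ReflTransGen.tail ih ⟨hc, hcl c hc d hbc, hbc⟩
where
  reachIn_mem {c : V} (h : ReachIn E X a c) : c ∈ X := by
    induction h with
    | refl => exact ha
    | tail _ h _ => exact h.2.1

/-- In a finite graph, from every vertex one can reach some forward ergodic set. -/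
theorem exists_reachable_forward_ergodic_set {V : Type*} [Fintype V] [Nonempty V]
    (E : V → V → Prop) (v : V) :
    ∃ (X : Set V) (x : V), IsForwardErgodicSet E X ∧ x ∈ X ∧ Reachable E v x := by
  classical
  set R : V → Finset V := fun x => Finset.univ.filter (fun y => Reachable E x y) with hR
  have hmemR : ∀ x y, y ∈ R x ↔ Reachable E x y := by
    intro x y; simp [hR]
  set S : Finset V := Finset.univ.filter (fun x => Reachable E v x) with hS
  have hvS : v ∈ S := by simp [hS, Reachable]; exact Finset.mem_filter.2 ⟨Finset.mem_univ _, Relation.ReflTransGen.refl⟩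
  obtain ⟨x, hxS, hmin⟩ := S.exists_min_image (fun x => (R x).card) ⟨v, hvS⟩
  have hxv : Reachable E v x := by simpa [hS] using hxS
  refine ⟨{y | Reachable E x y}, x, ?_, Relation.ReflTransGen.refl, hxv⟩
  have hcl : ∀ a ∈ {y | Reachable E x y}, ∀ b, E a b → b ∈ {y | Reachable E x y} :=
    fun a ha b hab => Relation.ReflTransGen.tail ha hab
  refine ⟨⟨x, Relation.ReflTransGen.refl⟩, ?_, fun a ha b hb hab => hb (hcl a ha b hab)⟩
  intro a ha b hb
  -- R a = R x
  have haS : a ∈ S := by simp [hS]; exact hxv.trans ha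
  have hsub : R a ⊆ R x := fun y hy =>
    (hmemR x y).2 (Relation.ReflTransGen.trans ha ((hmemR a y).1 hy))
  have heq : R a = R x :=
    Finset.eq_of_subset_of_card_le hsub (hmin a haS)
  have hab : Reachable E a b := by
    have : b ∈ R a := heq ▸ (hmemR x b).2 hb
    exact (hmemR a b).1 this
  exact reachIn_of_closed E _ hcl ha hab
end

section
/- Let V be a nonempty finite vertex type and E : V → V → Prop an adjacency relation. Then for every vertex v ∈ V there exists a backward ergodic set Y of (V,E) and a vertex y ∈ Y such that v is reachable from y. (Every vertex can be reached from a source.) -/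
/-- In a finite graph, every vertex can be reached from some backward ergodic set. -/
theorem exists_backward_ergodic_set_reaching {V : Type*} [Fintype V] [Nonempty V]
    (E : V → V → Prop) (v : V) :
    ∃ (Y : Set V) (y : V), IsBackwardErgodicSet E Y ∧ y ∈ Y ∧ Reachable E y v := by
  classical
  -- ancestors of a vertex
  let A : V → Finset V := fun u => Finset.univ.filter (fun w => Reachable E w u)
  have hAmono : ∀ {w u : V}, Reachable E w u → A w ⊆ A u := by
    intro w u hwu x hx
    simp only [A, Finset.mem_filter, Finset.mem_univ, true_and] at hx ⊢
    exact hx.trans hwu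
  -- pick u reaching v with minimal ancestor set
  obtain ⟨u, hu, humin⟩ := (Finset.univ.filter (fun u => Reachable E u v)).exists_min_image
    (fun u => (A u).card) ⟨v, by simp only [Finset.mem_filter, Finset.mem_univ, true_and]; exact Relation.ReflTransGen.refl⟩
  simp only [Finset.mem_filter, Finset.mem_univ, true_and] at hu
  have hmax : ∀ w, Reachable E w u → Reachable E u w := by
    intro w hwu
    by_contra huw
    have hwv : Reachable E w v := hwu.trans hu
    have hle := humin w (by simpa using hwv)
    have hss : A w ⊂ A u := by
      refine Finset.ssubset_iff_of_subset (hAmono hwu) |>.mpr ?_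
      exact ⟨u, by simp only [A, Finset.mem_filter, Finset.mem_univ, true_and]; exact Relation.ReflTransGen.refl, by simpa [A] using huw⟩
    exact absurd (Finset.card_lt_card hss) (not_lt.mpr hle)
  set Y : Set V := {x | Reachable E u x ∧ Reachable E x u} with hY
  have huY : u ∈ Y := ⟨Relation.ReflTransGen.refl, Relation.ReflTransGen.refl⟩
  have reachIn : ∀ x y : V, Relation.ReflTransGen E x y → x ∈ Y → Reachable E y u →
      ReachIn E Y x y := by
    intro x y hxy
    induction hxy using Relation.ReflTransGen.head_induction_on with
    | refl => intro _ _; exact Relation.ReflTransGen.refl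
    | head hxc hcy ih =>
      rename_i x c
      intro hxY hyu
      have hcY : c ∈ Y := ⟨hxY.1.trans (Relation.ReflTransGen.single hxc),
        Relation.ReflTransGen.trans hcy hyu⟩
      exact Relation.ReflTransGen.head ⟨hxY, hcY, hxc⟩ (ih hcY hyu)
  refine ⟨Y, u, ⟨⟨u, huY⟩, ?_, ?_⟩, huY, hu⟩
  · intro x hx y hy
    exact reachIn x y (hx.2.trans hy.1) hx hy.2
  · intro x hx w hw hwx
    exact hw ⟨hmax w ((Relation.ReflTransGen.single hwx).trans hx.2),
      (Relation.ReflTransGen.single hwx).trans hx.2⟩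
end

section
/- Let S be a nonempty finite type and P : Matrix S S ℝ a row-stochastic matrix (all entries nonnegative and each row summing to 1). Say j is accessible from i if (P^n) i j > 0 for some n ≥ 0. Suppose i ∈ S is a transient state, i.e., there exists a state j accessible from i such that i is not accessible from j. Then for every starting state k ∈ S, the sequence n ↦ (P^n) k i tends to 0 as n → ∞. (The probability to observe a transient state goes to zero.) -/
open Filter

/-- `j` is accessible from `i`: `(P^n) i j > 0` for some `n ≥ 0`. -/
def Accessible {S : Type*} [Fintype S] [DecidableEq S] (P : Matrix S S ℝ) (i j : S) : Prop :=
  ∃ n : ℕ, 0 < (P ^ n) i j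

/-- For a row-stochastic matrix, the probability to observe a transient state tends
to zero: if some `j` is accessible from `i` but `i` is not accessible from `j`, then
`(P^n) k i → 0` for every starting state `k`. -/
theorem transient_state_probability_tendsto_zero {S : Type*} [Fintype S] [Nonempty S]
    [DecidableEq S] (P : Matrix S S ℝ)
    (hnonneg : ∀ i j, 0 ≤ P i j) (hrow : ∀ i, ∑ j, P i j = 1)
    (i : S) (htransient : ∃ j : S, Accessible P i j ∧ ¬ Accessible P j i) :
    ∀ k : S, Tendsto (fun n : ℕ => (P ^ n) k i) atTop (nhds 0) := by
  classical
  obtain ⟨j, ⟨m, hm⟩, hji⟩ := htransient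
  intro k
  -- basic facts about powers
  have hpow_nonneg : ∀ (n : ℕ) (a b : S), 0 ≤ (P ^ n) a b := by
    intro n
    induction n with
    | zero =>
      intro a b
      rw [pow_zero, Matrix.one_apply]
      split <;> norm_num
    | succ n ih =>
      intro a b
      rw [pow_succ, Matrix.mul_apply]
      exact Finset.sum_nonneg fun c _ => mul_nonneg (ih a c) (hnonneg c b)
  have hpow_row : ∀ (n : ℕ) (a : S), ∑ b, (P ^ n) a b = 1 := by
    intro n
    induction n with
    | zero => intro a; simp [Matrix.one_apply]
    | succ n ih =>
      intro a
      simp only [pow_succ, Matrix.mul_apply]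
      rw [Finset.sum_comm]
      calc ∑ c, ∑ b, (P ^ n) a c * P c b
          = ∑ c, (P ^ n) a c * ∑ b, P c b := by
            refine Finset.sum_congr rfl fun c _ => ?_
            rw [Finset.mul_sum]
        _ = ∑ c, (P ^ n) a c := by
            refine Finset.sum_congr rfl fun c _ => ?_
            rw [hrow c, mul_one]
        _ = 1 := ih a
  -- product lower bound for powers
  have hkey : ∀ (a b : ℕ) (x y z : S), (P ^ a) x y * (P ^ b) y z ≤ (P ^ (a + b)) x z := by
    intro a b x y z
    rw [pow_add, Matrix.mul_apply]
    exact Finset.single_le_sum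
      (fun c _ => mul_nonneg (hpow_nonneg a x c) (hpow_nonneg b c z)) (Finset.mem_univ y)
  -- the absorbing set A of states from which i is not accessible
  set A : Finset S := Finset.univ.filter (fun s => ¬ Accessible P s i) with hA
  have hmemA : ∀ s : S, s ∈ A ↔ ¬ Accessible P s i := by
    intro s; simp [hA]
  have hiA : i ∉ A := by
    rw [hmemA]
    intro h
    exact h ⟨0, by simp [Matrix.one_apply]⟩
  have hjA : j ∈ A := (hmemA j).mpr hji
  -- entries leading out of A vanish
  have hout : ∀ (m' : ℕ) (s : S), s ∈ A → ∀ t, t ∉ A → (P ^ m') s t = 0 := by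
    intro m' s hs t ht
    by_contra h
    have hpos : 0 < (P ^ m') s t := lt_of_le_of_ne (hpow_nonneg m' s t) (Ne.symm h)
    rw [hmemA] at hs ht
    push_neg at ht
    obtain ⟨n, hn⟩ := ht
    exact hs ⟨m' + n, lt_of_lt_of_le (mul_pos hpos hn) (hkey m' n s t i)⟩
  have hArow : ∀ (m' : ℕ) (s : S), s ∈ A → ∑ t ∈ A, (P ^ m') s t = 1 := by
    intro m' s hs
    rw [← hpow_row m' s]
    exact Finset.sum_subset (Finset.subset_univ A) (fun t _ ht => hout m' s hs t ht)
  -- the mass in A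
  set g : ℕ → ℝ := fun n => ∑ s ∈ A, (P ^ n) k s with hg
  have hgsplit : ∀ (n m' : ℕ), g (n + m') = ∑ u, (P ^ n) k u * ∑ s ∈ A, (P ^ m') u s := by
    intro n m'
    simp only [hg, pow_add, Matrix.mul_apply]
    rw [Finset.sum_comm]
    refine Finset.sum_congr rfl fun u _ => ?_
    rw [Finset.mul_sum]
  have hstep : ∀ (n m' : ℕ), g n ≤ g (n + m') := by
    intro n m'
    rw [hgsplit n m']
    calc g n = ∑ u ∈ A, (P ^ n) k u * ∑ s ∈ A, (P ^ m') u s := by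
          refine Finset.sum_congr rfl fun u hu => ?_
          rw [hArow m' u hu, mul_one]
      _ ≤ ∑ u, (P ^ n) k u * ∑ s ∈ A, (P ^ m') u s := by
          refine Finset.sum_le_sum_of_subset_of_nonneg (Finset.subset_univ A) fun u _ _ => ?_
          exact mul_nonneg (hpow_nonneg n k u)
            (Finset.sum_nonneg fun s _ => hpow_nonneg m' u s)
  have hgmono : Monotone g := by
    intro a b hab
    have := hstep a (b - a)
    rwa [Nat.add_sub_cancel' hab] at this
  have hgbdd : ∀ n, g n ≤ 1 := by
    intro n
    rw [hg]
    calc ∑ s ∈ A, (P ^ n) k s ≤ ∑ s, (P ^ n) k s :=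
          Finset.sum_le_sum_of_subset_of_nonneg (Finset.subset_univ A)
            (fun s _ _ => hpow_nonneg n k s)
      _ = 1 := hpow_row n k
  -- key increment inequality
  have hinc : ∀ n : ℕ, g n + (P ^ n) k i * (P ^ m) i j ≤ g (n + m) := by
    intro n
    rw [hgsplit n m]
    have h1 : g n + (P ^ n) k i * (P ^ m) i j
        = ∑ u ∈ insert i A, (P ^ n) k u * (if u = i then (P ^ m) i j else ∑ s ∈ A, (P ^ m) u s) := by
      rw [Finset.sum_insert hiA]
      simp only [if_pos rfl]
      rw [add_comm]
      congr 1
      refine Finset.sum_congr rfl fun u hu => ?_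
      rw [if_neg (by rintro rfl; exact hiA hu), hArow m u hu, mul_one]
    rw [h1]
    calc ∑ u ∈ insert i A, (P ^ n) k u * (if u = i then (P ^ m) i j else ∑ s ∈ A, (P ^ m) u s)
        ≤ ∑ u ∈ insert i A, (P ^ n) k u * ∑ s ∈ A, (P ^ m) u s := by
          refine Finset.sum_le_sum fun u _ => ?_
          refine mul_le_mul_of_nonneg_left ?_ (hpow_nonneg n k u)
          split
          · next h =>
            subst h
            exact Finset.single_le_sum (fun s _ => hpow_nonneg m u s) hjA
          · exact le_rfl
      _ ≤ ∑ u, (P ^ n) k u * ∑ s ∈ A, (P ^ m) u s := by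
          refine Finset.sum_le_sum_of_subset_of_nonneg (Finset.subset_univ _) fun u _ _ => ?_
          exact mul_nonneg (hpow_nonneg n k u)
            (Finset.sum_nonneg fun s _ => hpow_nonneg m u s)
  -- convergence of g
  have hbdd : BddAbove (Set.range g) := ⟨1, by rintro x ⟨n, rfl⟩; exact hgbdd n⟩
  have hgL : Tendsto g atTop (nhds (⨆ n, g n)) := tendsto_atTop_ciSup hgmono hbdd
  have hgLm : Tendsto (fun n => g (n + m)) atTop (nhds (⨆ n, g n)) :=
    hgL.comp (tendsto_add_atTop_nat m)
  have hdiff : Tendsto (fun n => g (n + m) - g n) atTop (nhds 0) := by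
    have := hgLm.sub hgL
    simpa using this
  -- squeeze
  refine squeeze_zero (fun n => hpow_nonneg n k i)
    (g := fun n => (g (n + m) - g n) / (P ^ m) i j) (fun n => ?_) ?_
  · rw [le_div_iff₀ hm]
    have := hinc n
    linarith
  · have := hdiff.div_const ((P ^ m) i j)
    simpa using this
end

section
/- Let S be a nonempty finite type and P : Matrix S S ℝ a row-stochastic matrix (all entries nonnegative and each row summing to 1). Say j is accessible from i if (P^n) i j > 0 for some n ≥ 0, and call a state j recurrent if every state accessible from j has j accessible from it (equivalently, j belongs to a closed communicating class). Let R ⊆ S be the set of recurrent states. Then for every starting state i ∈ S, the sequence n ↦ ∑_{j ∈ R} (P^n) i j converges to 1 as n → ∞. (Asymptotically all probability mass is absorbed by the ergodic sets; in particular the rows of the core mixing matrix sum to 1.) -/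
open Filter

/-- A state `j` is recurrent if every state accessible from `j` has `j` accessible
from it. -/
def Recurrent {S : Type*} [Fintype S] [DecidableEq S] (P : Matrix S S ℝ) (j : S) : Prop :=
  ∀ k : S, Accessible P j k → Accessible P k j

section Aux

variable {S : Type*} [Fintype S] [DecidableEq S] (P : Matrix S S ℝ)

lemma pow_entry_nonneg (hnonneg : ∀ i j, 0 ≤ P i j) (n : ℕ) (i j : S) :
    0 ≤ (P ^ n) i j := by
  induction n generalizing i j with
  | zero =>
    rw [pow_zero, Matrix.one_apply]
    split <;> norm_num
  | succ n ih =>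
    rw [pow_succ, Matrix.mul_apply]
    exact Finset.sum_nonneg fun k _ => mul_nonneg (ih i k) (hnonneg k j)

lemma acc_refl (i : S) : Accessible P i i :=
  ⟨0, by simp [Matrix.one_apply]⟩

lemma acc_trans (hnonneg : ∀ i j, 0 ≤ P i j) {i j k : S}
    (h1 : Accessible P i j) (h2 : Accessible P j k) : Accessible P i k := by
  obtain ⟨n, hn⟩ := h1
  obtain ⟨m, hm⟩ := h2
  refine ⟨n + m, ?_⟩
  rw [pow_add, Matrix.mul_apply]
  exact Finset.sum_pos'
    (fun l _ => mul_nonneg (pow_entry_nonneg P hnonneg n i l) (pow_entry_nonneg P hnonneg m l k))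
    ⟨j, Finset.mem_univ j, mul_pos hn hm⟩

lemma pow_row_sum (hrow : ∀ i, ∑ j, P i j = 1) (n : ℕ) (i : S) :
    ∑ j, (P ^ n) i j = 1 := by
  induction n generalizing i with
  | zero => simp [Matrix.one_apply]
  | succ n ih =>
    simp only [pow_succ, Matrix.mul_apply]
    rw [Finset.sum_comm]
    simp_rw [← Finset.mul_sum, hrow, mul_one]
    exact ih i

open Classical in
lemma exists_rec_acc (hnonneg : ∀ i j, 0 ≤ P i j) (i : S) :
    ∃ j, Recurrent P j ∧ Accessible P i j := by
  have hA : (Finset.univ.filter (fun j => Accessible P i j)).Nonempty :=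
    ⟨i, by simp [acc_refl]⟩
  obtain ⟨j, hjA, hjmin⟩ := Finset.exists_min_image _
    (fun j => (Finset.univ.filter (fun k => Accessible P j k)).card) hA
  simp only [Finset.mem_filter, Finset.mem_univ, true_and] at hjA
  refine ⟨j, ?_, hjA⟩
  intro k hjk
  by_contra hkj
  have hsub : Finset.univ.filter (fun l => Accessible P k l) ⊂
      Finset.univ.filter (fun l => Accessible P j l) := by
    constructor
    · intro l hl
      simp only [Finset.mem_filter, Finset.mem_univ, true_and] at hl ⊢
      exact acc_trans P hnonneg hjk hl
    · intro h
      have := h (by simp [acc_refl] : j ∈ Finset.univ.filter (fun l => Accessible P j l))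
      simp only [Finset.mem_filter, Finset.mem_univ, true_and] at this
      exact hkj this
  have hlt := Finset.card_lt_card hsub
  have hkA : k ∈ Finset.univ.filter (fun j => Accessible P i j) := by
    simp only [Finset.mem_filter, Finset.mem_univ, true_and]
    exact acc_trans P hnonneg hjA hjk
  exact absurd (hjmin k hkA) (by omega)

lemma recurrent_closed (hnonneg : ∀ i j, 0 ≤ P i j) {j k : S}
    (hj : Recurrent P j) (hjk : Accessible P j k) : Recurrent P k := by
  intro l hkl
  have hjl : Accessible P j l := acc_trans P hnonneg hjk hkl
  exact acc_trans P hnonneg (hj l hjl) hjk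

end Aux

open Classical in
/-- For a row-stochastic matrix, asymptotically all probability mass is absorbed by
the recurrent states: the probability of being in the set of recurrent states tends
to 1 from every starting state. -/
theorem mass_on_recurrent_states_tendsto_one {S : Type*} [Fintype S] [Nonempty S]
    [DecidableEq S] (P : Matrix S S ℝ)
    (hnonneg : ∀ i j, 0 ≤ P i j) (hrow : ∀ i, ∑ j, P i j = 1) (i : S) :
    Tendsto (fun n : ℕ => ∑ j ∈ Finset.univ.filter (fun j => Recurrent P j), (P ^ n) i j)
      atTop (nhds 1) := by
  set RS := Finset.univ.filter (fun j => Recurrent P j) with hRS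
  set TS := Finset.univ.filter (fun j => ¬ Recurrent P j) with hTS
  set g : ℕ → S → ℝ := fun n i => ∑ j ∈ TS, (P ^ n) i j with hg
  -- mass split
  have hsplit : ∀ n i, (∑ j ∈ RS, (P ^ n) i j) + g n i = 1 := by
    intro n i
    rw [hg, hRS, hTS, Finset.sum_filter_add_sum_filter_not]
    exact pow_row_sum P hrow n i
  -- g is nonneg and ≤ 1
  have hg0 : ∀ n i, 0 ≤ g n i := fun n i =>
    Finset.sum_nonneg fun j _ => pow_entry_nonneg P hnonneg n i j
  have hg1 : ∀ n i, g n i ≤ 1 := by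
    intro n i
    rw [← pow_row_sum P hrow n i]
    exact Finset.sum_le_sum_of_subset_of_nonneg (Finset.filter_subset _ _)
      (fun j _ _ => pow_entry_nonneg P hnonneg n i j)
  -- recurrent states never lead to transient ones
  have hclosed : ∀ b : ℕ, ∀ k ∈ RS, g b k = 0 := by
    intro b k hk
    simp only [hRS, Finset.mem_filter, Finset.mem_univ, true_and] at hk
    refine Finset.sum_eq_zero fun j hj => ?_
    simp only [hTS, Finset.mem_filter, Finset.mem_univ, true_and] at hj
    by_contra hne
    have hpos : 0 < (P ^ b) k j :=
      lt_of_le_of_ne (pow_entry_nonneg P hnonneg b k j) (Ne.symm hne)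
    exact hj (recurrent_closed P hnonneg hk ⟨b, hpos⟩)
  -- decomposition
  have hdec : ∀ a b : ℕ, ∀ i : S, g (a + b) i = ∑ k ∈ TS, (P ^ a) i k * g b k := by
    intro a b i
    have h1 : g (a + b) i = ∑ k, (P ^ a) i k * g b k := by
      simp only [hg, pow_add, Matrix.mul_apply]
      rw [Finset.sum_comm]
      · simp_rw [Finset.mul_sum]
    rw [h1, ← Finset.sum_filter_add_sum_filter_not Finset.univ (fun j => Recurrent P j)]
    have : ∑ k ∈ RS, (P ^ a) i k * g b k = 0 :=
      Finset.sum_eq_zero fun k hk => by rw [hclosed b k hk, mul_zero]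
    rw [← hRS, ← hTS, this, zero_add]
  -- g antitone
  have hmono : ∀ i, Antitone fun n => g n i := by
    intro i
    refine antitone_nat_of_succ_le fun n => ?_
    rw [hdec n 1 i]
    calc ∑ k ∈ TS, (P ^ n) i k * g 1 k
        ≤ ∑ k ∈ TS, (P ^ n) i k * 1 := Finset.sum_le_sum fun k _ =>
          mul_le_mul_of_nonneg_left (hg1 1 k) (pow_entry_nonneg P hnonneg n i k)
      _ = g n i := by simp [hg]
  -- choose N and ε
  have hwit : ∀ k : S, ∃ n : ℕ, 0 < ∑ j ∈ RS, (P ^ n) k j := by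
    intro k
    obtain ⟨j, hjrec, n, hn⟩ := exists_rec_acc P hnonneg k
    refine ⟨n, lt_of_lt_of_le hn ?_⟩
    exact Finset.single_le_sum (fun j _ => pow_entry_nonneg P hnonneg n k j)
      (by simp [hRS, hjrec])
  choose nf hnf using hwit
  set N : ℕ := (Finset.univ.sup nf) + 1 with hN
  have hNpos : 0 < N := Nat.succ_pos _
  -- monotone of RS-mass in n
  have hRSmono : ∀ k : S, Monotone fun n => ∑ j ∈ RS, (P ^ n) k j := by
    intro k a b hab
    have := hmono k hab
    have ha := hsplit a k
    have hb := hsplit b k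
    linarith
  have hNge : ∀ k : S, nf k ≤ N := fun k =>
    le_trans (Finset.le_sup (Finset.mem_univ k)) (Nat.le_succ _)
  obtain ⟨k0, -, hk0⟩ := Finset.exists_min_image Finset.univ
    (fun k => ∑ j ∈ RS, (P ^ N) k j) Finset.univ_nonempty
  set ε : ℝ := ∑ j ∈ RS, (P ^ N) k0 j with hε
  have hεpos : 0 < ε := lt_of_lt_of_le (hnf k0) (hRSmono k0 (hNge k0))
  have hεle : ∀ k, ε ≤ ∑ j ∈ RS, (P ^ N) k j := fun k => hk0 k (Finset.mem_univ k)
  have hε1 : ε ≤ 1 := by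
    have := hsplit N k0
    have := hg0 N k0
    linarith
  -- contraction step
  have hstep : ∀ a : ℕ, ∀ i : S, g (a + N) i ≤ (1 - ε) * g a i := by
    intro a i
    rw [hdec a N i]
    calc ∑ k ∈ TS, (P ^ a) i k * g N k
        ≤ ∑ k ∈ TS, (P ^ a) i k * (1 - ε) := by
          refine Finset.sum_le_sum fun k _ => mul_le_mul_of_nonneg_left ?_
            (pow_entry_nonneg P hnonneg a i k)
          have := hsplit N k
          have := hεle k
          linarith
      _ = (1 - ε) * g a i := by rw [← Finset.sum_mul, mul_comm]
  -- geometric bound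
  have hgeo : ∀ q : ℕ, ∀ i : S, g (q * N) i ≤ (1 - ε) ^ q := by
    intro q
    induction q with
    | zero => intro i; simpa using hg1 0 i
    | succ q ih =>
      intro i
      have : (q + 1) * N = q * N + N := by ring
      rw [this, pow_succ]
      calc g (q * N + N) i ≤ (1 - ε) * g (q * N) i := hstep (q * N) i
        _ ≤ (1 - ε) * (1 - ε) ^ q :=
          mul_le_mul_of_nonneg_left (ih i) (by linarith)
        _ = (1 - ε) ^ q * (1 - ε) := mul_comm _ _
  -- final bound g n i ≤ (1-ε)^(n/N)
  have hbound : ∀ n : ℕ, g n i ≤ (1 - ε) ^ (n / N) := by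
    intro n
    calc g n i ≤ g (n / N * N) i := hmono i (Nat.div_mul_le_self n N)
      _ ≤ (1 - ε) ^ (n / N) := hgeo (n / N) i
  -- conclusion
  have htend0 : Tendsto (fun n : ℕ => g n i) atTop (nhds 0) := by
    have h1 : Tendsto (fun q : ℕ => (1 - ε) ^ q) atTop (nhds 0) :=
      tendsto_pow_atTop_nhds_zero_of_lt_one (by linarith) (by linarith)
    have h2 : Tendsto (fun n : ℕ => n / N) atTop atTop :=
      le_of_eq (Filter.map_div_atTop_eq_nat N hNpos)
    exact squeeze_zero (fun n => hg0 n i) hbound (h1.comp h2)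
  have heq : (fun n : ℕ => ∑ j ∈ Finset.univ.filter (fun j => Recurrent P j), (P ^ n) i j)
      = fun n => 1 - g n i := by
    funext n
    have := hsplit n i
    rw [← hRS]
    linarith
  rw [heq]
  have := (tendsto_const_nhds (x := (1:ℝ)) (f := atTop)).sub htend0
  simpa using this
end
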